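/- For any real constant F, the function κ(s;r) = 2(F - σ(s;r)) - (r - R(s))² satisfies ∂_s κ(s;r) = 2s(r - R(s)). Consequently, for r ∈ (R_c, R_0), κ(·;r) is strictly decreasing on (s₀, s₋(r)), strictly increasing on (s₋(r), s₊(r)), and strictly decreasing on (s₊(r), ∞) with κ(s;r) → -∞ as s → ∞. -/

import Mathlib

/-!
With `A(s) = ∫₀¹ √(s² - 2Ω(p)) dp` and `u(s) = s²/2 - Ω(1) - r`, the integrand of `σ` equals
`√(s² - 2Ω) - u·H_p - H·H_p`, and `∫₀¹ H·H_p = d²/2`, so `σ = A - u·d - d²/2`. Since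
`r - R = -(u + d)`, the cross terms cancel and `κ = 2F - 2A - u²`. Differentiating under the
integral sign, `A' = s·d`, hence `κ' = -2s(d + u) = 2s(r - R)`, and `A ≥ 0` gives `κ → -∞`.
-/

open Real MeasureTheory Set Filter Topology

lemma le_sq_sqrt_sSup_image {α : Type*} [TopologicalSpace α] {K : Set α} {f : α → ℝ}
    (hK : IsCompact K) (hf : ContinuousOn f K) {p : α} (hp : p ∈ K) :
    f p ≤ √(sSup (f '' K)) ^ 2 := by
  rw [sq_sqrt']
  exact (le_csSup (hK.image_of_continuousOn hf).bddAbove (mem_image_of_mem f hp)).trans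
    (le_max_left _ _)

lemma continuousOn_primitive_of_continuousOn {f : ℝ → ℝ} {a b : ℝ} (hab : a ≤ b)
    (hf : ContinuousOn f (Icc a b)) :
    ContinuousOn (fun q => ∫ t in a..q, f t) (Icc a b) := by
  simpa only [uIcc_of_le hab] using
    intervalIntegral.continuousOn_primitive_interval' (hf.intervalIntegrable_of_Icc hab)
      left_mem_uIcc

lemma integral_primitive_mul_eq_sq_div_two {f : ℝ → ℝ} {a b : ℝ} (hab : a ≤ b)
    (hf : ContinuousOn f (Icc a b)) :
    ∫ q in a..b, (∫ t in a..q, f t) * f q = (∫ t in a..b, f t) ^ 2 / 2 := by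
  have hprim := continuousOn_primitive_of_continuousOn hab hf
  have hderiv : ∀ q ∈ Ioo a b,
      HasDerivAt (fun q => (∫ t in a..q, f t) ^ 2 / 2) ((∫ t in a..q, f t) * f q) q := by
    intro q hq
    have hfq : HasDerivAt (fun q => ∫ t in a..q, f t) (f q) q :=
      intervalIntegral.integral_hasDerivAt_right
        ((hf.mono (Icc_subset_Icc_right hq.2.le)).intervalIntegrable_of_Icc hq.1.le)
        ((hf.mono Ioo_subset_Icc_self).stronglyMeasurableAtFilter isOpen_Ioo q hq)
        (hf.continuousAt (Icc_mem_nhds hq.1 hq.2))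
    exact ((hfq.fun_pow 2).div_const 2).congr_deriv (by norm_num; ring)
  rw [intervalIntegral.integral_eq_sub_of_hasDerivAt_of_le hab ((hprim.pow 2).div_const 2) hderiv
    ((hprim.mul hf).intervalIntegrable_of_Icc hab)]
  simp

lemma hasDerivAt_integral_sqrt_sq_sub {g : ℝ → ℝ} {a b s₀ s : ℝ} (hab : a ≤ b)
    (hg : ContinuousOn g (Icc a b)) (hs₀ : 0 ≤ s₀) (hgs₀ : ∀ p ∈ Icc a b, g p ≤ s₀ ^ 2)
    (hs : s₀ < s) :
    HasDerivAt (fun x => ∫ p in a..b, √(x ^ 2 - g p))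
      (s * ∫ p in a..b, (√(s ^ 2 - g p))⁻¹) s := by
  set m := (s₀ + s) / 2 with hm_def
  set δ := m ^ 2 - s₀ ^ 2 with hδ_def
  have hm : s₀ < m := by linarith
  have hδ : 0 < δ := by nlinarith
  have hgap : ∀ x ∈ Ioo m (s + 1), ∀ p ∈ Icc a b, δ ≤ x ^ 2 - g p := by
    intro x hx p hp
    nlinarith [hgs₀ p hp, hx.1]
  have hIoc : uIoc a b ⊆ Icc a b := by
    rw [uIoc_of_le hab]
    exact Ioc_subset_Icc_self
  have hsqrt : ∀ x, ContinuousOn (fun p => √(x ^ 2 - g p)) (Icc a b) :=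
    fun x => (continuousOn_const.sub hg).sqrt
  have hs_mem : s ∈ Ioo m (s + 1) := ⟨by linarith, by linarith⟩
  rw [← intervalIntegral.integral_const_mul]
  refine (intervalIntegral.hasDerivAt_integral_of_dominated_loc_of_deriv_le
    (F' := fun x p => x * (√(x ^ 2 - g p))⁻¹) (bound := fun _ => (s + 1) * (√δ)⁻¹)
    (Ioo_mem_nhds hs_mem.1 hs_mem.2) ?_ ((hsqrt s).intervalIntegrable_of_Icc hab) ?_ ?_
    intervalIntegrable_const ?_).2
  · exact Eventually.of_forall fun x =>
      ((hsqrt x).mono hIoc).aestronglyMeasurable measurableSet_uIoc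
  · refine ((continuousOn_const.mul ((hsqrt s).inv₀ fun p hp => ?_)).mono hIoc).aestronglyMeasurable
      measurableSet_uIoc
    exact (sqrt_pos.2 (hδ.trans_le (hgap s hs_mem p hp))).ne'
  · refine Eventually.of_forall fun p hp x hx => ?_
    have hx0 : 0 < x := by linarith [hx.1]
    rw [norm_of_nonneg (by positivity)]
    exact mul_le_mul hx.2.le (inv_anti₀ (sqrt_pos.2 hδ) (sqrt_le_sqrt (hgap x hx p (hIoc hp))))
      (by positivity) (by linarith)
  · refine Eventually.of_forall fun p hp x hx => ?_
    have hpos : 0 < x ^ 2 - g p := hδ.trans_le (hgap x hx p (hIoc hp))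
    exact (((hasDerivAt_pow 2 x).sub_const (g p)).sqrt hpos.ne').congr_deriv
      (by norm_num; field_simp)

lemma integral_sigma_integrand_eq {Ω hp h : ℝ → ℝ} {s r : ℝ} (hΩ : ContinuousOn Ω (Icc 0 1))
    (hpos : ∀ p ∈ Icc (0:ℝ) 1, 0 < s ^ 2 - 2 * Ω p)
    (hhp : ∀ p ∈ Icc (0:ℝ) 1, hp p = (√(s ^ 2 - 2 * Ω p))⁻¹)
    (hh : ∀ p, h p = ∫ τ in (0:ℝ)..p, hp τ) :
    ∫ p in (0:ℝ)..1, (1 / (2 * hp p ^ 2) - h p - Ω p + Ω 1 + r) * hp p =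
      (∫ p in (0:ℝ)..1, √(s ^ 2 - 2 * Ω p)) - (s ^ 2 / 2 - Ω 1 - r) * h 1 - h 1 ^ 2 / 2 := by
  have hsqrt : ContinuousOn (fun p => √(s ^ 2 - 2 * Ω p)) (Icc 0 1) :=
    (continuousOn_const.sub (continuousOn_const.mul hΩ)).sqrt
  have hhpc : ContinuousOn hp (Icc 0 1) :=
    (hsqrt.inv₀ fun p hp => (sqrt_pos.2 (hpos p hp)).ne').congr hhp
  have hhc : ContinuousOn h (Icc 0 1) :=
    (continuousOn_primitive_of_continuousOn zero_le_one hhpc).congr fun p _ => hh p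
  have hpointwise : ∀ p ∈ uIcc (0:ℝ) 1,
      (1 / (2 * hp p ^ 2) - h p - Ω p + Ω 1 + r) * hp p =
        √(s ^ 2 - 2 * Ω p) - (s ^ 2 / 2 - Ω 1 - r) * hp p - h p * hp p := by
    intro p hp01
    rw [uIcc_of_le zero_le_one] at hp01
    have hsq := sq_sqrt (hpos p hp01).le
    have hne := (sqrt_pos.2 (hpos p hp01)).ne'
    rw [hhp p hp01]
    field_simp
    linear_combination -hsq
  have hHHp : ∫ p in (0:ℝ)..1, h p * hp p = h 1 ^ 2 / 2 := by
    simpa only [← hh] using integral_primitive_mul_eq_sq_div_two zero_le_one hhpc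
  have hI₁ : IntervalIntegrable (fun p => √(s ^ 2 - 2 * Ω p)) volume 0 1 :=
    hsqrt.intervalIntegrable_of_Icc zero_le_one
  have hI₂ : IntervalIntegrable (fun p => (s ^ 2 / 2 - Ω 1 - r) * hp p) volume 0 1 :=
    (continuousOn_const.mul hhpc).intervalIntegrable_of_Icc zero_le_one
  have hI₃ : IntervalIntegrable (fun p => h p * hp p) volume 0 1 :=
    (hhc.mul hhpc).intervalIntegrable_of_Icc zero_le_one
  rw [intervalIntegral.integral_congr hpointwise, intervalIntegral.integral_sub (hI₁.sub hI₂) hI₃,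
    intervalIntegral.integral_sub hI₁ hI₂, intervalIntegral.integral_const_mul, hHHp, hh 1]

lemma hasDerivAt_const_sub_integral_sqrt_sub_sq {Ω : ℝ → ℝ} {s₀ s : ℝ} (F c : ℝ)
    (hΩ : ContinuousOn Ω (Icc 0 1)) (hs₀ : 0 ≤ s₀) (hΩs₀ : ∀ p ∈ Icc (0:ℝ) 1, 2 * Ω p ≤ s₀ ^ 2)
    (hs : s₀ < s) :
    HasDerivAt
      (fun x => 2 * F - 2 * (∫ p in (0:ℝ)..1, √(x ^ 2 - 2 * Ω p)) - (x ^ 2 / 2 - c) ^ 2)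
      (-2 * s * ((∫ p in (0:ℝ)..1, (√(s ^ 2 - 2 * Ω p))⁻¹) + (s ^ 2 / 2 - c))) s := by
  have hA := hasDerivAt_integral_sqrt_sq_sub (g := fun p => 2 * Ω p) zero_le_one
    (continuousOn_const.mul hΩ) hs₀ hΩs₀ hs
  refine (((hA.const_mul 2).const_sub (2 * F)).fun_sub
    ((((hasDerivAt_pow 2 s).div_const 2).sub_const c).fun_pow 2)).congr_deriv ?_
  norm_num
  ring

lemma strictAntiOn_of_hasDerivAt_neg {D : Set ℝ} (hD : Convex ℝ D) (hDo : IsOpen D)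
    {f f' : ℝ → ℝ} (hf : ∀ x ∈ D, HasDerivAt f (f' x) x) (hf' : ∀ x ∈ D, f' x < 0) :
    StrictAntiOn f D :=
  strictAntiOn_of_hasDerivWithinAt_neg hD (fun x hx => (hf x hx).continuousAt.continuousWithinAt)
    (by rw [hDo.interior_eq]; exact fun x hx => (hf x hx).hasDerivWithinAt)
    (by rwa [hDo.interior_eq])

lemma strictMonoOn_of_hasDerivAt_pos {D : Set ℝ} (hD : Convex ℝ D) (hDo : IsOpen D)
    {f f' : ℝ → ℝ} (hf : ∀ x ∈ D, HasDerivAt f (f' x) x) (hf' : ∀ x ∈ D, 0 < f' x) :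
    StrictMonoOn f D :=
  strictMonoOn_of_hasDerivWithinAt_pos hD (fun x hx => (hf x hx).continuousAt.continuousWithinAt)
    (by rw [hDo.interior_eq]; exact fun x hx => (hf x hx).hasDerivWithinAt)
    (by rwa [hDo.interior_eq])

lemma tendsto_const_sub_sq_half_sub_atBot (a c : ℝ) :
    Tendsto (fun x : ℝ => a - (x ^ 2 / 2 - c) ^ 2) atTop atBot := by
  have hu : Tendsto (fun x : ℝ => x ^ 2 / 2 - c) atTop atTop :=
    tendsto_atTop_add_const_right _ _
      ((tendsto_pow_atTop two_ne_zero).atTop_div_const two_pos)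
  exact tendsto_atBot_add_const_left _ a
    (tendsto_neg_atTop_atBot.comp ((tendsto_pow_atTop two_ne_zero).comp hu))

theorem stmt8_general (ω Ω : ℝ → ℝ) (hωcont : ContinuousOn ω (Icc 0 1))
    (hΩ : ∀ p, Ω p = ∫ t in (0:ℝ)..p, ω t)
    (s₀ : ℝ) (hs₀ : s₀ = Real.sqrt (sSup ((fun p => 2 * Ω p) '' Icc (0:ℝ) 1)))
    (Hp H : ℝ → ℝ → ℝ)
    (hHp : ∀ p s, Hp p s = (s ^ 2 - 2 * Ω p) ^ (-(1/2) : ℝ))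
    (hH : ∀ p s, H p s = ∫ τ in (0:ℝ)..p, Hp τ s)
    (d R : ℝ → ℝ) (hd : ∀ s, d s = H 1 s)
    (hR : ∀ s, R s = s ^ 2 / 2 - Ω 1 + d s)
    (σ : ℝ → ℝ → ℝ)
    (hσ : ∀ s r, σ s r = ∫ p in (0:ℝ)..1,
        (1 / (2 * (Hp p s) ^ 2) - H p s - Ω p + Ω 1 + r) * Hp p s)
    (r sm sp : ℝ) (F : ℝ) (κ : ℝ → ℝ)
    (hκ : ∀ s, κ s = 2 * (F - σ s r) - (r - R s) ^ 2)
    (h1 : s₀ < sm) (h2 : sm < sp)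
    (hsign1 : ∀ s ∈ Ioo sm sp, R s < r)
    (hsign2 : ∀ s ∈ Ioo s₀ sm, r < R s)
    (hsign3 : ∀ s ∈ Ioi sp, r < R s) :
    (∀ s, s₀ < s → HasDerivAt κ (2 * s * (r - R s)) s) ∧
    StrictAntiOn κ (Ioo s₀ sm) ∧ StrictMonoOn κ (Ioo sm sp) ∧
    StrictAntiOn κ (Ioi sp) ∧ Tendsto κ atTop atBot := by
  have hΩc : ContinuousOn Ω (Icc 0 1) :=
    (continuousOn_primitive_of_continuousOn zero_le_one hωcont).congr fun p _ => hΩ p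
  have hs₀nn : 0 ≤ s₀ := hs₀ ▸ sqrt_nonneg _
  have hΩs₀ : ∀ p ∈ Icc (0:ℝ) 1, 2 * Ω p ≤ s₀ ^ 2 := fun p hp =>
    hs₀ ▸ le_sq_sqrt_sSup_image isCompact_Icc (continuousOn_const.mul hΩc) hp
  have hgap : ∀ s, s₀ < s → ∀ p ∈ Icc (0:ℝ) 1, 0 < s ^ 2 - 2 * Ω p := fun s hs p hp => by
    nlinarith [hΩs₀ p hp]
  have hHp' : ∀ s, s₀ < s → ∀ p ∈ Icc (0:ℝ) 1, Hp p s = (√(s ^ 2 - 2 * Ω p))⁻¹ :=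
    fun s hs p hp => by rw [hHp, rpow_neg (hgap s hs p hp).le, sqrt_eq_rpow]
  have hκ_eq : ∀ s, s₀ < s →
      κ s = 2 * F - 2 * (∫ p in (0:ℝ)..1, √(s ^ 2 - 2 * Ω p)) - (s ^ 2 / 2 - (Ω 1 + r)) ^ 2 :=
    fun s hs => by
      rw [hκ, hσ, integral_sigma_integrand_eq hΩc (hgap s hs) (hHp' s hs) (fun p => hH p s), hR, hd]
      ring
  have hderiv : ∀ s, s₀ < s → HasDerivAt κ (2 * s * (r - R s)) s := fun s hs => by
    have hd' : d s = ∫ p in (0:ℝ)..1, (√(s ^ 2 - 2 * Ω p))⁻¹ := by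
      rw [hd, hH]
      exact intervalIntegral.integral_congr fun p hp =>
        hHp' s hs p (by rwa [uIcc_of_le zero_le_one] at hp)
    refine ((hasDerivAt_const_sub_integral_sqrt_sub_sq F (Ω 1 + r) hΩc hs₀nn hΩs₀ hs
      ).congr_of_eventuallyEq (eventually_of_mem (Ioi_mem_nhds hs) hκ_eq)).congr_deriv ?_
    rw [hR, hd']
    ring
  refine ⟨hderiv, ?_, ?_, ?_, ?_⟩
  · exact strictAntiOn_of_hasDerivAt_neg (convex_Ioo _ _) isOpen_Ioo (fun x hx => hderiv x hx.1)
      fun x hx => mul_neg_of_pos_of_neg (by linarith [hx.1]) (sub_neg.2 (hsign2 x hx))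
  · exact strictMonoOn_of_hasDerivAt_pos (convex_Ioo _ _) isOpen_Ioo
      (fun x hx => hderiv x (h1.trans hx.1))
      fun x hx => mul_pos (by linarith [hx.1]) (sub_pos.2 (hsign1 x hx))
  · exact strictAntiOn_of_hasDerivAt_neg (convex_Ioi _) isOpen_Ioi
      (fun x hx => hderiv x ((h1.trans h2).trans hx))
      fun x hx => mul_neg_of_pos_of_neg (by linarith [mem_Ioi.1 hx]) (sub_neg.2 (hsign3 x hx))
  · refine tendsto_atBot_mono' atTop ?_ (tendsto_const_sub_sq_half_sub_atBot (2 * F) (Ω 1 + r))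
    filter_upwards [eventually_gt_atTop s₀] with x hx
    have hA := intervalIntegral.integral_nonneg (μ := volume) zero_le_one
      fun p _ => sqrt_nonneg (x ^ 2 - 2 * Ω p)
    rw [hκ_eq x hx]
    linarith

theorem stmt8 (ω Ω : ℝ → ℝ) (hωcont : ContinuousOn ω (Icc 0 1))
    (hΩ : ∀ p, Ω p = ∫ t in (0:ℝ)..p, ω t)
    (s₀ : ℝ) (hs₀ : s₀ = Real.sqrt (sSup ((fun p => 2 * Ω p) '' Icc (0:ℝ) 1)))
    (Hp H : ℝ → ℝ → ℝ)
    (hHp : ∀ p s, Hp p s = (s ^ 2 - 2 * Ω p) ^ (-(1/2) : ℝ))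
    (hH : ∀ p s, H p s = ∫ τ in (0:ℝ)..p, Hp τ s)
    (d R : ℝ → ℝ) (hd : ∀ s, d s = H 1 s)
    (hR : ∀ s, R s = s ^ 2 / 2 - Ω 1 + d s)
    (σ : ℝ → ℝ → ℝ)
    (hσ : ∀ s r, σ s r = ∫ p in (0:ℝ)..1,
        (1 / (2 * (Hp p s) ^ 2) - H p s - Ω p + Ω 1 + r) * Hp p s)
    (r sm sp : ℝ) (F : ℝ) (κ : ℝ → ℝ)
    (hκ : ∀ s, κ s = 2 * (F - σ s r) - (r - R s) ^ 2)
    (h1 : s₀ < sm) (h2 : sm < sp)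
    (hRm : R sm = r) (hRp : R sp = r)
    (hsign1 : ∀ s ∈ Ioo sm sp, R s < r)
    (hsign2 : ∀ s ∈ Ioo s₀ sm, r < R s)
    (hsign3 : ∀ s ∈ Ioi sp, r < R s) :
    (∀ s, s₀ < s → HasDerivAt κ (2 * s * (r - R s)) s) ∧
    StrictAntiOn κ (Ioo s₀ sm) ∧ StrictMonoOn κ (Ioo sm sp) ∧
    StrictAntiOn κ (Ioi sp) ∧ Tendsto κ atTop atBot :=
  stmt8_general ω Ω hωcont hΩ s₀ hs₀ Hp H hHp hH d R hd hR σ hσ r sm sp F κ hκ h1 h2 hsign1 hsign2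
    hsign3
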